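/- arXiv:2103.08221 — 3 statements merged into one kernel-verified Lean document; each statement's English description precedes it below -/
import Mathlib

section
/- Let V be a real inner product space and let σ : V × V → ℝ be an alternating (antisymmetric) bilinear form such that σ(v,w) ≤ ‖v‖·‖w‖ for all v, w ∈ V. If e₁, e₂ ∈ V are orthonormal vectors with σ(e₁,e₂) = 1, then for every u ∈ V one has σ(u,e₁) = −⟨u,e₂⟩ and σ(u,e₂) = ⟨u,e₁⟩; in particular, if u is orthogonal to both e₁ and e₂, then σ(u,e₁) = σ(u,e₂) = 0. -/
open scoped RealInnerProductSpace

lemma key_le {V : Type*} [NormedAddCommGroup V] [InnerProductSpace ℝ V]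
    (σ : V →ₗ[ℝ] V →ₗ[ℝ] ℝ)
    (hbound : ∀ v w : V, σ v w ≤ ‖v‖ * ‖w‖)
    (e f w : V) (he : ‖e‖ = 1) (hf : ‖f‖ = 1) (hef : σ e f = 1)
    (hw : ⟪e, w⟫ = 0) : σ w f ≤ 0 := by
  by_contra h
  push_neg at h
  set a := σ w f with ha
  set b := ‖w‖ ^ 2 with hb
  have hb0 : 0 ≤ b := sq_nonneg _
  set t : ℝ := a / (b + 1) with htdef
  have ht : 0 < t := div_pos h (by linarith)
  have hnorm : ‖e + t • w‖ ^ 2 = 1 + t ^ 2 * b := by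
    rw [norm_add_sq_real, real_inner_smul_right, hw, norm_smul, he]
    simp [mul_pow, hb]
  have hval : σ (e + t • w) f = 1 + t * a := by
    simp [map_add, map_smul, hef, ha]
  have hle : 1 + t * a ≤ ‖e + t • w‖ := by
    rw [← hval]
    calc σ (e + t • w) f ≤ ‖e + t • w‖ * ‖f‖ := hbound _ _
    _ = ‖e + t • w‖ := by rw [hf, mul_one]
  have hsq : (1 + t * a) ^ 2 ≤ 1 + t ^ 2 * b := by
    rw [← hnorm]
    have h0 : (0:ℝ) ≤ 1 + t * a := by positivity
    nlinarith [norm_nonneg (e + t • w)]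
  have htb : t * (b + 1) = a := by
    rw [htdef]; exact div_mul_cancel₀ a (ne_of_gt (by linarith))
  nlinarith [mul_pos ht h, sq_nonneg t, mul_pos ht ht]

lemma key_eq {V : Type*} [NormedAddCommGroup V] [InnerProductSpace ℝ V]
    (σ : V →ₗ[ℝ] V →ₗ[ℝ] ℝ)
    (hbound : ∀ v w : V, σ v w ≤ ‖v‖ * ‖w‖)
    (e f w : V) (he : ‖e‖ = 1) (hf : ‖f‖ = 1) (hef : σ e f = 1)
    (hw : ⟪e, w⟫ = 0) : σ w f = 0 := by
  have h1 := key_le σ hbound e f w he hf hef hw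
  have h2 := key_le σ hbound e f (-w) he hf hef (by rw [inner_neg_right, hw, neg_zero])
  simp only [map_neg, LinearMap.neg_apply] at h2
  linarith

/-- If an alternating bilinear form `σ` on a real inner product space
satisfies `σ(v,w) ≤ ‖v‖·‖w‖` and equals `1` on an orthonormal pair `(e₁, e₂)`, then
`σ(·,e₁) = -⟪·,e₂⟫` and `σ(·,e₂) = ⟪·,e₁⟫`; in particular `σ(u,e₁) = σ(u,e₂) = 0` for `u`
orthogonal to both `e₁` and `e₂`. -/
theorem statement2 {V : Type*} [NormedAddCommGroup V] [InnerProductSpace ℝ V]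
    (σ : V →ₗ[ℝ] V →ₗ[ℝ] ℝ)
    (halt : ∀ v : V, σ v v = 0)
    (hbound : ∀ v w : V, σ v w ≤ ‖v‖ * ‖w‖)
    (e₁ e₂ : V) (h₁ : ‖e₁‖ = 1) (h₂ : ‖e₂‖ = 1) (h₁₂ : ⟪e₁, e₂⟫ = 0)
    (hσ : σ e₁ e₂ = 1) (u : V) :
    (σ u e₁ = -⟪u, e₂⟫ ∧ σ u e₂ = ⟪u, e₁⟫) ∧
      (⟪u, e₁⟫ = 0 → ⟪u, e₂⟫ = 0 → σ u e₁ = 0 ∧ σ u e₂ = 0) := by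
  -- antisymmetry
  have hanti : ∀ v w : V, σ v w = -σ w v := by
    intro v w
    have := halt (v + w)
    simp [map_add, halt] at this
    linarith
  have hσ' : σ e₂ e₁ = -1 := by rw [hanti, hσ]
  -- orthogonal component
  set w : V := u - ⟪u, e₁⟫ • e₁ - ⟪u, e₂⟫ • e₂ with hwdef
  have hwe₁ : ⟪e₁, w⟫ = 0 := by
    simp [hwdef, inner_sub_right, inner_smul_right, real_inner_self_eq_norm_sq, h₁, h₁₂,
      real_inner_comm e₁ u]
  have h₂₁ : ⟪e₂, e₁⟫ = 0 := by rw [real_inner_comm]; exact h₁₂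
  have hwe₂ : ⟪e₂, w⟫ = 0 := by
    simp [hwdef, inner_sub_right, inner_smul_right, real_inner_self_eq_norm_sq, h₂,
      h₂₁, real_inner_comm e₂ u]
  -- σ w e₂ = 0
  have k1 : σ w e₂ = 0 := key_eq σ hbound e₁ e₂ w h₁ h₂ hσ hwe₁
  -- σ w e₁ = 0 : use the flip
  have k2 : σ w e₁ = 0 := by
    have := key_eq σ.flip (fun v w => by
        rw [LinearMap.flip_apply]
        calc σ w v ≤ ‖w‖ * ‖v‖ := hbound _ _
        _ = ‖v‖ * ‖w‖ := mul_comm _ _)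
      e₂ e₁ w h₂ h₁ (by rw [LinearMap.flip_apply, hσ]) hwe₂
    rw [LinearMap.flip_apply] at this
    rw [hanti, this, neg_zero]
  have hu : u = w + ⟪u, e₁⟫ • e₁ + ⟪u, e₂⟫ • e₂ := by
    rw [hwdef]; abel
  have r1 : σ u e₁ = -⟪u, e₂⟫ := by
    conv_lhs => rw [hu]
    simp [map_add, map_smul, k2, halt, hσ']
  have r2 : σ u e₂ = ⟪u, e₁⟫ := by
    conv_lhs => rw [hu]
    simp [map_add, map_smul, k1, halt, hσ]
  refine ⟨⟨r1, r2⟩, fun hu1 hu2 => ⟨by rw [r1, hu2, neg_zero], by rw [r2, hu1]⟩⟩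
end

section
/- For every family (a_{d,g})_{d ≥ 1, g ≥ 0} of rational numbers there exists a unique family (n_{d,g})_{d ≥ 1, g ≥ 0} of rational numbers such that for every D ≥ 1 the identity Σ_{g ≥ 0} a_{D,g}·t^{2g−2} = Σ_{(k,d) : k·d = D} Σ_{g ≥ 0} (1/k)·n_{d,g}·s_k^{2g−2} holds in ℚ((t)). (Both sides are well-defined elements of ℚ((t)): on the left the exponents 2g−2 are distinct and bounded below by −2, and on the right s_k^{2g−2} has t-adic valuation 2g−2, so for each power of t only finitely many terms contribute.) -/
noncomputable section

/-- `sk k ∈ ℚ((t))` is the Taylor series of `2 sin(k t / 2)`: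
`sk k = Σ_{n ≥ 0} (−1)^n k^{2n+1} t^{2n+1} / (4^n (2n+1)!)`. -/
def sk (k : ℕ) : LaurentSeries ℚ :=
  HahnSeries.ofPowerSeries ℤ ℚ (PowerSeries.mk fun n =>
    if n % 2 = 1 then ((-1 : ℚ) ^ ((n - 1) / 2) * (k : ℚ) ^ n) / ((2 : ℚ) ^ (n - 1) * n.factorial)
    else 0)

namespace Stmt9

def c (k : ℕ) (n : ℕ) : ℚ :=
  if n % 2 = 1 then ((-1 : ℚ) ^ ((n - 1) / 2) * (k : ℚ) ^ n) / ((2 : ℚ) ^ (n - 1) * n.factorial)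
  else 0

lemma sk_eq (k : ℕ) : sk k = HahnSeries.ofPowerSeries ℤ ℚ (PowerSeries.mk (c k)) := rfl

def U (k : ℕ) : PowerSeries ℚ := PowerSeries.mk fun n => c k (n + 1)

lemma X_mul_U (k : ℕ) : (PowerSeries.X : PowerSeries ℚ) * U k = PowerSeries.mk (c k) := by
  ext n
  cases n with
  | zero => simp [U, c, PowerSeries.coeff_zero_X_mul]
  | succ n => simp [U, PowerSeries.coeff_succ_X_mul]

lemma constantCoeff_U (k : ℕ) : PowerSeries.constantCoeff (U k) = (k : ℚ) := by
  have : PowerSeries.constantCoeff (U k) = PowerSeries.coeff 0 (U k) := by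
    simp [PowerSeries.coeff_zero_eq_constantCoeff]
  rw [this]
  simp [U, c, Nat.factorial]

def EvenPS (φ : PowerSeries ℚ) : Prop := ∀ n, n % 2 = 1 → PowerSeries.coeff n φ = 0

lemma U_even (k : ℕ) : EvenPS (U k) := by
  intro n hn
  simp only [U, PowerSeries.coeff_mk, c]
  rw [if_neg]
  omega

lemma evenPS_iff (φ : PowerSeries ℚ) : EvenPS φ ↔ PowerSeries.rescale (-1 : ℚ) φ = φ := by
  constructor
  · intro h
    ext n
    rw [PowerSeries.coeff_rescale]
    rcases Nat.even_or_odd n with he | ho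
    · rw [he.neg_one_pow, one_mul]
    · rw [h n (Nat.odd_iff.mp ho), mul_zero]
  · intro h n hn
    have := congrArg (PowerSeries.coeff n) h
    rw [PowerSeries.coeff_rescale] at this
    have hodd : Odd n := Nat.odd_iff.mpr hn
    rw [hodd.neg_one_pow] at this
    linarith

lemma evenPS_pow {φ : PowerSeries ℚ} (h : EvenPS φ) (n : ℕ) : EvenPS (φ ^ n) := by
  rw [evenPS_iff] at h ⊢
  rw [map_pow, h]

lemma evenPS_inv {φ : PowerSeries ℚ} (h : EvenPS φ) : EvenPS φ⁻¹ := by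
  rw [evenPS_iff] at h ⊢
  by_cases hc : PowerSeries.constantCoeff φ = 0
  · rw [PowerSeries.inv_eq_zero.mpr hc, map_zero]
  · have key : PowerSeries.rescale (-1 : ℚ) φ⁻¹ * PowerSeries.rescale (-1 : ℚ) φ = 1 := by
      rw [← map_mul, PowerSeries.inv_mul_cancel _ hc, map_one]
    rw [PowerSeries.eq_inv_iff_mul_eq_one hc]
    rwa [h] at key

lemma single_one_pow (n : ℕ) :
    (HahnSeries.single (1 : ℤ) (1 : ℚ)) ^ n = HahnSeries.single (n : ℤ) (1 : ℚ) := by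
  rw [HahnSeries.single_pow]
  simp

lemma single_one_zpow (m : ℤ) :
    (HahnSeries.single (1 : ℤ) (1 : ℚ)) ^ m = HahnSeries.single m (1 : ℚ) := by
  cases m with
  | ofNat n => rw [Int.ofNat_eq_coe, zpow_natCast, single_one_pow]
  | negSucc n =>
      rw [zpow_negSucc, single_one_pow]
      refine inv_eq_of_mul_eq_one_left ?_
      rw [HahnSeries.single_mul_single, one_mul]
      have h0 : Int.negSucc n + ((n + 1 : ℕ) : ℤ) = 0 := by
        rw [Int.negSucc_eq]; push_cast; ring
      rw [h0]
      exact HahnSeries.single_zero_one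

lemma ofPS_inv (φ : PowerSeries ℚ) (h : PowerSeries.constantCoeff φ ≠ 0) :
    (HahnSeries.ofPowerSeries ℤ ℚ φ)⁻¹ = HahnSeries.ofPowerSeries ℤ ℚ φ⁻¹ :=
  inv_eq_of_mul_eq_one_right (by rw [← map_mul, PowerSeries.mul_inv_cancel _ h, map_one])

lemma ofPS_coeff_neg (φ : PowerSeries ℚ) (i : ℤ) (h : i < 0) :
    (HahnSeries.ofPowerSeries ℤ ℚ φ).coeff i = 0 := by
  rw [HahnSeries.ofPowerSeries_apply]
  apply HahnSeries.embDomain_notin_range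
  rintro ⟨n, rfl⟩
  change ((n : ℕ) : ℤ) < 0 at h
  omega

lemma sk_factor (k : ℕ) :
    sk k = HahnSeries.single (1 : ℤ) (1 : ℚ) * HahnSeries.ofPowerSeries ℤ ℚ (U k) := by
  rw [sk_eq, ← X_mul_U, map_mul, HahnSeries.ofPowerSeries_X]

lemma key (k : ℕ) (hk : 1 ≤ k) (m : ℤ) :
    ∃ W : PowerSeries ℚ, sk k ^ m = HahnSeries.single m (1 : ℚ) * HahnSeries.ofPowerSeries ℤ ℚ W
      ∧ EvenPS W ∧ PowerSeries.constantCoeff W = (k : ℚ) ^ m := by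
  have hck : (k : ℚ) ≠ 0 := by
    exact_mod_cast Nat.cast_ne_zero.mpr (by omega)
  have hU : PowerSeries.constantCoeff (U k) ≠ 0 := by rw [constantCoeff_U]; exact hck
  cases m with
  | ofNat n =>
      refine ⟨U k ^ n, ?_, evenPS_pow (U_even k) n, ?_⟩
      · rw [Int.ofNat_eq_coe, zpow_natCast, sk_factor, mul_pow, single_one_pow, map_pow]
      · rw [map_pow, constantCoeff_U, Int.ofNat_eq_coe, zpow_natCast]
  | negSucc n =>
      have hUp : PowerSeries.constantCoeff (U k ^ (n + 1)) ≠ 0 := by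
        rw [map_pow, constantCoeff_U]
        exact pow_ne_zero _ hck
      refine ⟨(U k ^ (n + 1))⁻¹, ?_, evenPS_inv (evenPS_pow (U_even k) (n + 1)), ?_⟩
      · rw [zpow_negSucc, sk_factor, mul_pow, single_one_pow, ← map_pow, mul_inv,
          ofPS_inv _ hUp, ← single_one_pow, ← zpow_negSucc, single_one_zpow]
      · rw [PowerSeries.constantCoeff_inv, map_pow, constantCoeff_U, zpow_negSucc]

lemma coeff_zpow_of_lt (k : ℕ) (hk : 1 ≤ k) {m j : ℤ} (h : j < m) :
    (sk k ^ m).coeff j = 0 := by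
  obtain ⟨W, hW, _, _⟩ := key k hk m
  rw [hW, show j = (j - m) + m by ring, HahnSeries.coeff_single_mul_add, one_mul]
  exact ofPS_coeff_neg _ _ (by omega)

lemma coeff_zpow_self (k : ℕ) (hk : 1 ≤ k) (m : ℤ) :
    (sk k ^ m).coeff m = (k : ℚ) ^ m := by
  obtain ⟨W, hW, _, hWc⟩ := key k hk m
  have h2 : ((HahnSeries.single m (1 : ℚ)) * (HahnSeries.ofPowerSeries ℤ ℚ W)).coeff (0 + m)
      = 1 * (HahnSeries.ofPowerSeries ℤ ℚ W).coeff 0 := HahnSeries.coeff_single_mul_add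
  rw [zero_add] at h2
  rw [hW, h2, one_mul,
    show (0 : ℤ) = ((0 : ℕ) : ℤ) from rfl, HahnSeries.ofPowerSeries_apply_coeff,
    PowerSeries.coeff_zero_eq_constantCoeff, hWc]

lemma coeff_zpow_odd (k : ℕ) (hk : 1 ≤ k) {m j : ℤ} (hm : m % 2 = 0) (hj : j % 2 = 1) :
    (sk k ^ m).coeff j = 0 := by
  rcases lt_or_ge j m with h | h
  · exact coeff_zpow_of_lt k hk h
  · obtain ⟨W, hW, hWe, _⟩ := key k hk m
    rw [hW, show j = (((j - m).toNat : ℕ) : ℤ) + m by omega, HahnSeries.coeff_single_mul_add,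
      one_mul, HahnSeries.ofPowerSeries_apply_coeff]
    exact hWe _ (by omega)

def ifSum (n : ℕ → ℕ → ℚ) (d g : ℕ) : ℚ :=
  ∑ k ∈ d.divisors, ∑ g' ∈ Finset.range (g + 1),
    if k = 1 ∧ g' = g then 0
    else (1 / (k : ℚ)) * n (d / k) g' * ((sk k ^ (2 * (g' : ℤ) - 2)).coeff (2 * (g : ℤ) - 2))

lemma F_one_diag (g : ℕ) : ((sk 1 ^ (2 * (g : ℤ) - 2)).coeff (2 * (g : ℤ) - 2)) = 1 := by
  rw [coeff_zpow_self 1 le_rfl]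
  simp

lemma sum_split (n : ℕ → ℕ → ℚ) (d g : ℕ) (hd : 1 ≤ d) :
    (∑ k ∈ d.divisors, ∑ g' ∈ Finset.range (g + 1),
      (1 / (k : ℚ)) * n (d / k) g' * ((sk k ^ (2 * (g' : ℤ) - 2)).coeff (2 * (g : ℤ) - 2)))
    = ifSum n d g + n d g := by
  set t : ℕ → ℕ → ℚ := fun k g' =>
    (1 / (k : ℚ)) * n (d / k) g' * ((sk k ^ (2 * (g' : ℤ) - 2)).coeff (2 * (g : ℤ) - 2)) with ht
  have step1 : (∑ k ∈ d.divisors, ∑ g' ∈ Finset.range (g + 1), t k g')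
      = (∑ k ∈ d.divisors, ∑ g' ∈ Finset.range (g + 1),
          ((if k = 1 ∧ g' = g then 0 else t k g') + (if k = 1 ∧ g' = g then t k g' else 0))) := by
    refine Finset.sum_congr rfl fun k _ => Finset.sum_congr rfl fun g' _ => ?_
    by_cases h : k = 1 ∧ g' = g <;> simp [h]
  rw [step1]
  have step2 : ∀ k ∈ d.divisors,
      (∑ g' ∈ Finset.range (g + 1),
        ((if k = 1 ∧ g' = g then 0 else t k g') + (if k = 1 ∧ g' = g then t k g' else 0)))
      = (∑ g' ∈ Finset.range (g + 1), (if k = 1 ∧ g' = g then 0 else t k g'))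
        + (∑ g' ∈ Finset.range (g + 1), (if k = 1 ∧ g' = g then t k g' else 0)) :=
    fun k _ => Finset.sum_add_distrib
  rw [Finset.sum_congr rfl step2, Finset.sum_add_distrib]
  congr 1
  have h1 : (1 : ℕ) ∈ d.divisors := Nat.one_mem_divisors.mpr (by omega)
  rw [Finset.sum_eq_single 1]
  · have : ∀ g' ∈ Finset.range (g + 1),
        (if (1 : ℕ) = 1 ∧ g' = g then t 1 g' else 0) = (if g' = g then t 1 g' else 0) := by
      intro g' _
      simp
    rw [Finset.sum_congr rfl this, Finset.sum_ite_eq' (Finset.range (g + 1)) g,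
      if_pos (Finset.mem_range.mpr (by omega))]
    rw [ht]
    simp [F_one_diag g]
  · intro k _ hk
    apply Finset.sum_eq_zero
    intro g' _
    rw [if_neg (by tauto)]
  · intro h
    exact absurd h1 h

def nf (a : ℕ → ℕ → ℚ) : ℕ → ℕ → ℚ
  | d, g => a d g - ∑ k ∈ d.divisors.attach, ∑ g' ∈ (Finset.range (g + 1)).attach,
      if h : (k : ℕ) = 1 ∧ (g' : ℕ) = g then 0
      else (1 / ((k : ℕ) : ℚ)) * nf a (d / (k : ℕ)) (g' : ℕ)
            * ((sk (k : ℕ) ^ (2 * ((g' : ℕ) : ℤ) - 2)).coeff (2 * (g : ℤ) - 2))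
  termination_by d g => (d, g)
  decreasing_by
    by_cases h1 : (k : ℕ) = 1
    · have hdk : d / (k : ℕ) = d := by rw [h1, Nat.div_one]
      rw [hdk]
      have hg' : (g' : ℕ) < g + 1 := Finset.mem_range.mp g'.2
      exact Prod.Lex.right _ (by omega)
    · apply Prod.Lex.left
      have hk := Nat.mem_divisors.mp k.2
      have hkpos : 0 < (k : ℕ) := Nat.pos_of_mem_divisors k.2
      exact Nat.div_lt_self (Nat.pos_of_ne_zero hk.2) (by omega)

lemma nf_eq (a : ℕ → ℕ → ℚ) (d g : ℕ) : nf a d g = a d g - ifSum (nf a) d g := by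
  rw [nf]
  congr 1
  rw [ifSum]
  rw [← Finset.sum_attach d.divisors (fun k => ∑ g' ∈ Finset.range (g + 1),
    if k = 1 ∧ g' = g then 0
    else (1 / (k : ℚ)) * nf a (d / k) g' * ((sk k ^ (2 * (g' : ℤ) - 2)).coeff (2 * (g : ℤ) - 2)))]
  refine Finset.sum_congr rfl fun k _ => ?_
  rw [← Finset.sum_attach (Finset.range (g + 1)) (fun g' =>
    if (k : ℕ) = 1 ∧ g' = g then 0
    else (1 / ((k : ℕ) : ℚ)) * nf a (d / (k : ℕ)) g'
      * ((sk (k : ℕ) ^ (2 * (g' : ℤ) - 2)).coeff (2 * (g : ℤ) - 2)))]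
  refine Finset.sum_congr rfl fun g' _ => ?_
  simp only [dite_eq_ite]


lemma lhs_eval_some (b : ℕ → ℚ) {j : ℤ} {G : ℕ} (hj : j = 2 * (G : ℤ) - 2) :
    (∑' g : ℕ, if j = 2 * (g : ℤ) - 2 then b g else 0) = b G := by
  rw [tsum_eq_single G (fun g hg => if_neg (by omega))]
  rw [if_pos hj]

lemma lhs_eval_none (b : ℕ → ℚ) {j : ℤ} (hj : ∀ G : ℕ, j ≠ 2 * (G : ℤ) - 2) :
    (∑' g : ℕ, if j = 2 * (g : ℤ) - 2 then b g else 0) = 0 := by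
  have : (fun g : ℕ => if j = 2 * (g : ℤ) - 2 then b g else 0) = fun _ => 0 := by
    funext g
    exact if_neg (hj g)
  rw [this, tsum_zero]

lemma rhs_eval (n : ℕ → ℕ → ℚ) (D : ℕ) (j : ℤ) :
    (∑ k ∈ D.divisors, ∑' g : ℕ,
        (1 / (k : ℚ)) * n (D / k) g * ((sk k ^ (2 * (g : ℤ) - 2)).coeff j))
    = ∑ k ∈ D.divisors, ∑ g ∈ Finset.range (j.natAbs + 2),
        (1 / (k : ℚ)) * n (D / k) g * ((sk k ^ (2 * (g : ℤ) - 2)).coeff j) := by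
  refine Finset.sum_congr rfl fun k hk => ?_
  have hk1 : 1 ≤ k := Nat.pos_of_mem_divisors hk
  refine tsum_eq_sum fun g hg => ?_
  rw [Finset.mem_range, not_lt] at hg
  rw [coeff_zpow_of_lt k hk1 (by omega), mul_zero]

lemma shrink (n : ℕ → ℕ → ℚ) (D : ℕ) (G : ℕ) (k : ℕ) (hk1 : 1 ≤ k) :
    (∑ g ∈ Finset.range ((2 * (G : ℤ) - 2).natAbs + 2),
        (1 / (k : ℚ)) * n (D / k) g * ((sk k ^ (2 * (g : ℤ) - 2)).coeff (2 * (G : ℤ) - 2)))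
    = ∑ g ∈ Finset.range (G + 1),
        (1 / (k : ℚ)) * n (D / k) g * ((sk k ^ (2 * (g : ℤ) - 2)).coeff (2 * (G : ℤ) - 2)) := by
  refine (Finset.sum_subset ?_ ?_).symm
  · intro x hx
    rw [Finset.mem_range] at hx ⊢
    omega
  · intro x _ hx
    rw [Finset.mem_range, not_lt] at hx
    rw [coeff_zpow_of_lt k hk1 (by omega), mul_zero]


/-- the key finite-sum identity satisfied by any solution -/
lemma sat_iff (a n : ℕ → ℕ → ℚ)
    (h : ∀ D : ℕ, 1 ≤ D → ∀ j : ℤ,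
        (∑' g : ℕ, if j = 2 * (g : ℤ) - 2 then a D g else 0)
          = ∑ k ∈ D.divisors, ∑' g : ℕ,
              (1 / (k : ℚ)) * n (D / k) g * ((sk k ^ (2 * (g : ℤ) - 2)).coeff j))
    (D : ℕ) (hD : 1 ≤ D) (G : ℕ) : a D G = ifSum n D G + n D G := by
  have hh := h D hD (2 * (G : ℤ) - 2)
  rw [lhs_eval_some (a D) rfl, rhs_eval] at hh
  rw [Finset.sum_congr rfl (fun k hk => shrink n D G k (Nat.pos_of_mem_divisors hk))] at hh
  rw [hh, sum_split n D G hD]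

end Stmt9

/-- (BPS change of variables.) For every family `(a d g)` of rationals
(`d ≥ 1`, `g ≥ 0`) there is a unique family `(n d g)` of rationals such that for every
`D ≥ 1` one has `Σ_g a D g · t^{2g−2} = Σ_{k·d = D} Σ_g (1/k)·n d g·s_k^{2g−2}` in `ℚ((t))`.
The identity is stated coefficientwise in `t`: for each `j ∈ ℤ`, the coefficient of `t^j` on
the left is `a D g` if `j = 2g−2` (else `0`), and on the right only finitely many `g`
contribute to each `t`-coefficient, so the sums over `g` are the `tsum`s below. -/
theorem statement9 (a : ℕ → ℕ → ℚ) :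
    ∃ n : ℕ → ℕ → ℚ,
      (∀ D : ℕ, 1 ≤ D → ∀ j : ℤ,
        (∑' g : ℕ, if j = 2 * (g : ℤ) - 2 then a D g else 0)
          = ∑ k ∈ D.divisors, ∑' g : ℕ,
              (1 / (k : ℚ)) * n (D / k) g * ((sk k ^ (2 * (g : ℤ) - 2)).coeff j)) ∧
      ∀ n' : ℕ → ℕ → ℚ,
        (∀ D : ℕ, 1 ≤ D → ∀ j : ℤ,
          (∑' g : ℕ, if j = 2 * (g : ℤ) - 2 then a D g else 0)
            = ∑ k ∈ D.divisors, ∑' g : ℕ,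
                (1 / (k : ℚ)) * n' (D / k) g * ((sk k ^ (2 * (g : ℤ) - 2)).coeff j)) →
        ∀ d : ℕ, 1 ≤ d → ∀ g : ℕ, n' d g = n d g := by
  refine ⟨Stmt9.nf a, ?_, ?_⟩
  · intro D hD j
    rw [Stmt9.rhs_eval]
    by_cases hj : ∃ G : ℕ, j = 2 * (G : ℤ) - 2
    · obtain ⟨G, rfl⟩ := hj
      rw [Stmt9.lhs_eval_some (a D) rfl]
      rw [Finset.sum_congr rfl (fun k hk => Stmt9.shrink (Stmt9.nf a) D G k (Nat.pos_of_mem_divisors hk))]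
      rw [Stmt9.sum_split (Stmt9.nf a) D G hD, Stmt9.nf_eq]
      ring
    · push_neg at hj
      rw [Stmt9.lhs_eval_none (a D) hj]
      have hcase : j % 2 = 1 ∨ j < -2 := by
        rcases Int.even_or_odd j with he | ho
        · obtain ⟨t, rfl⟩ := he
          right
          have := hj (t + 1).toNat
          omega
        · obtain ⟨t, rfl⟩ := ho
          left
          omega
      symm
      refine Finset.sum_eq_zero fun k hk => Finset.sum_eq_zero fun g _ => ?_
      have hk1 : 1 ≤ k := Nat.pos_of_mem_divisors hk
      rcases hcase with hodd | hlt
      · rw [Stmt9.coeff_zpow_odd k hk1 (by omega) hodd, mul_zero]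
      · rw [Stmt9.coeff_zpow_of_lt k hk1 (by omega), mul_zero]
  · intro n' hn' d
    induction d using Nat.strong_induction_on with
    | _ d IHd =>
      intro hd g
      induction g using Nat.strong_induction_on with
      | _ g IHg =>
        have h1 : a d g = Stmt9.ifSum n' d g + n' d g := Stmt9.sat_iff a n' hn' d hd g
        have h2 : Stmt9.ifSum n' d g = Stmt9.ifSum (Stmt9.nf a) d g := by
          unfold Stmt9.ifSum
          refine Finset.sum_congr rfl fun k hk => Finset.sum_congr rfl fun g' hg' => ?_
          by_cases hc : k = 1 ∧ g' = g
          · rw [if_pos hc, if_pos hc]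
          · rw [if_neg hc, if_neg hc]
            have hk1 : 1 ≤ k := Nat.pos_of_mem_divisors hk
            have hdvd := (Nat.mem_divisors.mp hk).1
            by_cases hk1' : k = 1
            · have hg'g : g' < g := by
                rw [Finset.mem_range] at hg'
                rcases Nat.lt_or_ge g' g with h | h
                · exact h
                · exact absurd ⟨hk1', by omega⟩ hc
              subst hk1'
              rw [Nat.div_one, IHg g' hg'g]
            · have hlt : d / k < d := Nat.div_lt_self (by omega) (by omega)
              have hpos : 1 ≤ d / k := Nat.one_le_div_iff (by omega) |>.mpr
                (Nat.le_of_dvd (by omega) hdvd)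
              rw [IHd (d / k) hlt hpos g']
        rw [Stmt9.nf_eq, ← h2]
        linarith

end
end

section
/- Suppose (e_{d,g})_{d ≥ 1, g ≥ 0} is a family of rational numbers such that for every D ≥ 1 one has Σ_{d | D} Σ_{g ≥ 0} e_{d,g} · ([q^{D/d}] G_g) = 0 in ℚ((t)), where [q^j]G_g denotes the coefficient of q^j in G_g (the sum over g is well defined coefficientwise in t, since the t-adic valuation of [q^j]G_g tends to +∞ as g → ∞). Then e_{d,g} = 0 for every d ≥ 1 and g ≥ 0. (Equivalently: the coefficients in an expansion of a series as Σ_{d,g} e_{d,g}·G_g(q^d, t) are unique, as follows from G_g(q,t) = t^{2g−2}q + higher order terms.) -/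
noncomputable section

/-- The hook length of the cell `(i+1, j+1)` (in 1-indexed matrix coordinates) of the Young
diagram of the partition `μ`: `h(□) = (μ_i − j) + (μ'_j − i) + 1`. -/
def hookLength {d : ℕ} (μ : Nat.Partition d) (i j : ℕ) : ℕ :=
  ((μ.parts.sort (· ≤ ·)).reverse.getD i 0 - (j + 1))
    + ((μ.parts.filter (fun p => j + 1 ≤ p)).card - (i + 1)) + 1

/-- The coefficient of `q^d` in `P_h = Σ_{d ≥ 1} (Σ_{μ ⊢ d} Π_{□ ∈ μ} s_{h(□)}^{2h−2}) q^d`: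
the product runs over the cells `(i+1, j+1)`, `j < μ_{i+1}`, of the Young diagram of `μ`. -/
def PhCoeff (h d : ℕ) : LaurentSeries ℚ :=
  if d = 0 then 0 else
    ∑ μ : Nat.Partition d,
      ∏ i ∈ Finset.range (μ.parts.sort (· ≤ ·)).reverse.length,
        ∏ j ∈ Finset.range ((μ.parts.sort (· ≤ ·)).reverse.getD i 0),
          sk (hookLength μ i j) ^ (2 * (h : ℤ) - 2)

/-- The coefficient of `q^D` in `G_h = log(1 + P_h) = Σ_{n ≥ 1} (−1)^{n+1} P_h^n / n`. Since
`P_h` has zero constant term, the coefficient of `q^D` in `P_h^n` vanishes for `n > D`, so the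
sum may be truncated at `n = D`. -/
def GhCoeff (h D : ℕ) : LaurentSeries ℚ :=
  ∑ n ∈ Finset.Icc 1 D,
    ((-1 : ℚ) ^ (n + 1) / n) •
      (PowerSeries.coeff (R := LaurentSeries ℚ) D ((PowerSeries.mk (PhCoeff h)) ^ n))

/-! ### Auxiliary lemmas -/

lemma sk_coeff_neg (k : ℕ) (j : ℤ) (hj : j < 0) : (sk k).coeff j = 0 := by
  rw [sk, HahnSeries.ofPowerSeries_apply, HahnSeries.embDomain_notin_range]
  rintro ⟨n, hn⟩
  have h2 : (n : ℤ) = j := hn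
  omega

lemma sk_coeff_zero (k : ℕ) : (sk k).coeff (0 : ℤ) = 0 := by
  have : ((0:ℕ) : ℤ) = (0:ℤ) := rfl
  rw [sk, ← this, HahnSeries.ofPowerSeries_apply_coeff]
  simp

lemma sk_one_coeff_one : (sk 1).coeff (1 : ℤ) = 1 := by
  have : ((1:ℕ) : ℤ) = (1:ℤ) := rfl
  rw [sk, ← this, HahnSeries.ofPowerSeries_apply_coeff]
  simp

/-- `x` is nonzero with order `z` and leading coefficient `1`. -/
def Good (z : ℤ) (x : LaurentSeries ℚ) : Prop :=
  x ≠ 0 ∧ x.order = z ∧ x.leadingCoeff = 1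

lemma good_one : Good 0 1 :=
  ⟨one_ne_zero, HahnSeries.order_one, HahnSeries.leadingCoeff_one⟩

lemma good_mul {a b : ℤ} {x y : LaurentSeries ℚ} (hx : Good a x) (hy : Good b y) :
    Good (a + b) (x * y) := by
  obtain ⟨hx0, hxo, hxl⟩ := hx
  obtain ⟨hy0, hyo, hyl⟩ := hy
  refine ⟨mul_ne_zero hx0 hy0, ?_, ?_⟩
  · rw [HahnSeries.order_mul hx0 hy0, hxo, hyo]
  · rw [HahnSeries.leadingCoeff_eq, HahnSeries.order_mul hx0 hy0,
      HahnSeries.coeff_mul_order_add_order, hxl, hyl, one_mul]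

lemma good_inv {a : ℤ} {x : LaurentSeries ℚ} (hx : Good a x) : Good (-a) x⁻¹ := by
  obtain ⟨hx0, hxo, hxl⟩ := hx
  have hi0 : x⁻¹ ≠ 0 := inv_ne_zero hx0
  have hmul : x * x⁻¹ = 1 := mul_inv_cancel₀ hx0
  have horder : x.order + x⁻¹.order = 0 := by
    rw [← HahnSeries.order_mul hx0 hi0, hmul, HahnSeries.order_one]
  have hio : x⁻¹.order = -a := by omega
  refine ⟨hi0, hio, ?_⟩
  have := HahnSeries.coeff_mul_order_add_order x x⁻¹
  rw [hmul, horder] at this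
  have h1 : (1 : LaurentSeries ℚ).coeff (0 : ℤ) = 1 := by
    simp
  rw [h1, hxl, one_mul] at this
  exact this.symm

lemma good_pow {x : LaurentSeries ℚ} (hx : Good 1 x) (n : ℕ) : Good n (x ^ n) := by
  induction n with
  | zero => simpa using good_one
  | succ n ih =>
    have hcast : ((n + 1 : ℕ) : ℤ) = (n : ℤ) + 1 := by push_cast; ring
    rw [pow_succ, hcast]
    exact good_mul ih hx

lemma good_zpow {x : LaurentSeries ℚ} (hx : Good 1 x) (z : ℤ) : Good z (x ^ z) := by
  rcases Int.eq_nat_or_neg z with ⟨n, rfl | rfl⟩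
  · rw [zpow_natCast]; exact good_pow hx n
  · rw [zpow_neg, zpow_natCast]; exact good_inv (good_pow hx n)

lemma good_sk_one : Good 1 (sk 1) := by
  have hne : (sk 1) ≠ 0 := by
    intro h
    have := sk_one_coeff_one
    rw [h] at this
    simp at this
  have hcoeff : ∀ j : ℤ, j < 1 → (sk 1).coeff j = 0 := by
    intro j hj
    rcases lt_or_eq_of_le (by omega : j ≤ 0) with h | h
    · exact sk_coeff_neg 1 j h
    · rw [h]; exact sk_coeff_zero 1
  have horder : (sk 1).order = 1 := by
    apply le_antisymm
    · exact HahnSeries.order_le_of_coeff_ne_zero (by rw [sk_one_coeff_one]; exact one_ne_zero)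
    · by_contra hlt
      push_neg at hlt
      have := HahnSeries.leadingCoeff_eq (x := sk 1)
      rw [hcoeff _ hlt] at this
      exact hne (HahnSeries.leadingCoeff_eq_zero.mp this)
  exact ⟨hne, horder, by rw [HahnSeries.leadingCoeff_eq, horder, sk_one_coeff_one]⟩

lemma sk_zpow_coeff_self (z : ℤ) : (sk 1 ^ z).coeff z = 1 := by
  obtain ⟨h0, ho, hl⟩ := good_zpow good_sk_one z
  have := HahnSeries.leadingCoeff_eq (x := sk 1 ^ z)
  rw [ho, hl] at this
  exact this.symm

lemma sk_zpow_coeff_lt {z j : ℤ} (hj : j < z) : (sk 1 ^ z).coeff j = 0 := by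
  obtain ⟨h0, ho, hl⟩ := good_zpow good_sk_one z
  exact HahnSeries.coeff_eq_zero_of_lt_order (by rw [ho]; exact hj)

lemma parts_sort_one (μ : Nat.Partition 1) : (μ.parts.sort (· ≤ ·)).reverse = [1] := by
  rw [Nat.Partition.partition_one_parts μ, Multiset.sort_singleton]
  rfl

lemma hookLength_one (μ : Nat.Partition 1) : hookLength μ 0 0 = 1 := by
  rw [hookLength, Nat.Partition.partition_one_parts μ, Multiset.sort_singleton]
  rw [Multiset.filter_singleton, if_pos (le_refl 1)]
  simp

lemma PhCoeff_one (g : ℕ) : PhCoeff g 1 = sk 1 ^ (2 * (g : ℤ) - 2) := by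
  rw [PhCoeff, if_neg one_ne_zero, Finset.univ_unique, Finset.sum_singleton]
  have h1 := parts_sort_one (default : Nat.Partition 1)
  rw [h1]
  simp only [List.length_singleton, Finset.range_one, Finset.prod_singleton,
    List.getD_cons_zero, hookLength_one]

lemma GhCoeff_one_eq (g : ℕ) : GhCoeff g 1 = sk 1 ^ (2 * (g : ℤ) - 2) := by
  rw [GhCoeff, Finset.Icc_self, Finset.sum_singleton, pow_one, PowerSeries.coeff_mk,
    PhCoeff_one]
  norm_num

/-- (Linear independence of the series `G_g(q^d, t)`.) If a family of
rationals `(e d g)` satisfies `Σ_{d | D} Σ_g e d g · [q^{D/d}]G_g = 0` in `ℚ((t))` for every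
`D ≥ 1` (stated coefficientwise in `t`; for each `t`-coefficient only finitely many `g`
contribute, so the sum over `g` is the `tsum` below), then `e d g = 0` for all `d ≥ 1`,
`g ≥ 0`. -/
theorem statement10 (e : ℕ → ℕ → ℚ)
    (hyp : ∀ D : ℕ, 1 ≤ D → ∀ j : ℤ,
      (∑ d ∈ D.divisors, ∑' g : ℕ, e d g * ((GhCoeff g (D / d)).coeff j)) = 0) :
    ∀ d : ℕ, 1 ≤ d → ∀ g : ℕ, e d g = 0 := by
  suffices H : ∀ d : ℕ, (∀ d' : ℕ, d' < d → 1 ≤ d' → ∀ g, e d' g = 0) →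
      1 ≤ d → ∀ g, e d g = 0 by
    intro d
    induction d using Nat.strong_induction_on with
    | _ d ih => exact H d (fun d' hd' => ih d' hd')
  intro d ih hd
  -- Reduce the hypothesis at `D = d` to the single divisor `d' = d`.
  have key : ∀ j : ℤ, (∑' g : ℕ, e d g * ((sk 1 ^ (2 * (g : ℤ) - 2)).coeff j)) = 0 := by
    intro j
    have h := hyp d hd j
    rw [Finset.sum_eq_single_of_mem d (Nat.mem_divisors_self d (by omega))] at h
    · rwa [Nat.div_self hd, funext (fun g => congrArg (fun x => e d g * HahnSeries.coeff x j)
        (GhCoeff_one_eq g))] at h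
    · intro d' hd' hne
      have hpos : 1 ≤ d' := Nat.pos_of_mem_divisors hd'
      have hlt : d' < d :=
        lt_of_le_of_ne (Nat.le_of_dvd (by omega) (Nat.dvd_of_mem_divisors hd')) hne
      have : ∀ g : ℕ, e d' g * ((GhCoeff g (d / d')).coeff j) = 0 := by
        intro g
        rw [ih d' hlt hpos g, zero_mul]
      rw [tsum_congr (fun g => this g), tsum_zero]
  -- Induction on `g`, extracting the coefficient of `t^(2g-2)`.
  intro g
  induction g using Nat.strong_induction_on with
  | _ g ihg =>
    have h := key (2 * (g : ℤ) - 2)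
    rw [tsum_eq_single g ?_] at h
    · rwa [sk_zpow_coeff_self, mul_one] at h
    · intro g' hg'
      rcases lt_or_gt_of_ne hg' with h1 | h1
      · rw [ihg g' h1, zero_mul]
      · have hlt : (2 * (g : ℤ) - 2) < 2 * (g' : ℤ) - 2 := by
          have : (g : ℤ) < (g' : ℤ) := by exact_mod_cast h1
          omega
        rw [sk_zpow_coeff_lt hlt, mul_zero]

end
end
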